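/- Let L : Σ* → Δ(Σ_$) be a language model and E an equivalence relation on Δ(Σ_$) such that supp(ρ) = supp(ρ') whenever ρ =_E ρ'. Then the relation ≡_E is an equivalence relation on Σ* (reflexive, symmetric, and transitive). -/

import Mathlib

/-!
Reflexivity and symmetry of `≡_E` are inherited from `E`. For transitivity, given `u ≡_E v`,
`v ≡_E t` and a continuation `w` with `P(uw) > 0` and `P(tw) > 0`, one needs `P(vw) > 0` in order
to chain `L(uw) =_E L(vw) =_E L(tw)`. This holds by induction on `w`: `P(uwσ) > 0` forces
`P(uw) > 0` and `σ ∈ supp L(uw)`; by induction `P(vw) > 0`, so `L(uw) =_E L(vw)`, and since `E`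
preserves supports, `σ ∈ supp L(vw)`, i.e. `P(vwσ) > 0`.
-/

section NerodeRel

variable {α : Type} {L : List α → Option α → ℝ} {P : List α → ℝ}
  {E : (Option α → ℝ) → (Option α → ℝ) → Prop}

/-- The relation `≡_E`. -/
def NerodeRel (P : List α → ℝ) (L : List α → Option α → ℝ)
    (E : (Option α → ℝ) → (Option α → ℝ) → Prop) (u v : List α) : Prop :=
  (0 < P u ↔ 0 < P v) ∧
    ∀ w : List α, 0 < P (u ++ w) → 0 < P (v ++ w) → E (L (u ++ w)) (L (v ++ w))

theorem pos_append_singleton_iff (hL : ∀ u σ, 0 ≤ L u σ)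
    (hPs : ∀ u σ, P (u ++ [σ]) = P u * L u (some σ)) (u : List α) (σ : α) :
    0 < P (u ++ [σ]) ↔ 0 < P u ∧ 0 < L u (some σ) := by
  rw [hPs]
  refine ⟨fun h => ?_, fun ⟨hu, hσ⟩ => mul_pos hu hσ⟩
  have hu : 0 < P u := pos_of_mul_pos_left h (hL u σ)
  exact ⟨hu, pos_of_mul_pos_right h hu.le⟩

theorem NerodeRel.pos_append (hL : ∀ u σ, 0 ≤ L u σ)
    (hPs : ∀ u σ, P (u ++ [σ]) = P u * L u (some σ))
    (hsupp : ∀ ρ ρ', E ρ ρ' → {σ : Option α | 0 < ρ σ} = {σ : Option α | 0 < ρ' σ})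
    {u v : List α} (huv : NerodeRel P L E u v) (w : List α) (hu : 0 < P (u ++ w)) :
    0 < P (v ++ w) := by
  induction w using List.reverseRecOn with
  | nil => simpa using huv.1.mp (by simpa using hu)
  | append_singleton w σ ih =>
    rw [← List.append_assoc, pos_append_singleton_iff hL hPs] at hu ⊢
    obtain ⟨huw, hσ⟩ := hu
    have hvw := ih huw
    exact ⟨hvw, (Set.ext_iff.mp (hsupp _ _ (huv.2 w huw hvw)) _).mp hσ⟩

theorem nerodeRel_equivalence (hL : ∀ u σ, 0 ≤ L u σ)
    (hPs : ∀ u σ, P (u ++ [σ]) = P u * L u (some σ)) (hE : Equivalence E)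
    (hsupp : ∀ ρ ρ', E ρ ρ' → {σ : Option α | 0 < ρ σ} = {σ : Option α | 0 < ρ' σ}) :
    Equivalence (NerodeRel P L E) where
  refl _ := ⟨Iff.rfl, fun _ _ _ => hE.refl _⟩
  symm h := ⟨h.1.symm, fun w hv hu => hE.symm (h.2 w hu hv)⟩
  trans {_ _ _} h₁ h₂ := ⟨h₁.1.trans h₂.1, fun w hu ht =>
    have hv := h₁.pos_append hL hPs hsupp w hu
    hE.trans (h₁.2 w hu hv) (h₂.2 w hv ht)⟩

end NerodeRel

theorem stmt_5_general (α : Type) [Fintype α]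
    (L : List α → Option α → ℝ)
    (hL : ∀ u, (∀ σ, 0 ≤ L u σ) ∧ (∑ σ : Option α, L u σ) = 1)
    (P : List α → ℝ)
    (hPs : ∀ u σ, P (u ++ [σ]) = P u * L u (some σ))
    (E : (Option α → ℝ) → (Option α → ℝ) → Prop)
    (hE : Equivalence E)
    (hsupp : ∀ ρ ρ', E ρ ρ' → {σ : Option α | 0 < ρ σ} = {σ : Option α | 0 < ρ' σ}) :
    Equivalence (fun u v : List α =>
      (0 < P u ↔ 0 < P v) ∧
        ∀ w : List α, 0 < P (u ++ w) → 0 < P (v ++ w) → E (L (u ++ w)) (L (v ++ w))) :=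
  nerodeRel_equivalence (fun u => (hL u).1) hPs hE hsupp

/-- The relation `≡_E` is an equivalence relation on `Σ*`
(reflexive, symmetric, transitive). Here `u ≡_E v` iff `(P(u) > 0 ↔ P(v) > 0)` and
`∀ w, P(uw) > 0 → P(vw) > 0 → L(uw) =_E L(vw)`; `E` is an equivalence relation on
distributions preserving supports. (`Σ_$ = Option α`, `none` = `$`.) -/
theorem stmt_5 (α : Type) [Fintype α] [Nonempty α]
    (L : List α → Option α → ℝ)
    (hL : ∀ u, (∀ σ, 0 ≤ L u σ) ∧ (∑ σ : Option α, L u σ) = 1)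
    (P : List α → ℝ)
    (hP0 : P [] = 1)
    (hPs : ∀ u σ, P (u ++ [σ]) = P u * L u (some σ))
    (E : (Option α → ℝ) → (Option α → ℝ) → Prop)
    (hE : Equivalence E)
    (hsupp : ∀ ρ ρ', E ρ ρ' → {σ : Option α | 0 < ρ σ} = {σ : Option α | 0 < ρ' σ}) :
    Equivalence (fun u v : List α =>
      (0 < P u ↔ 0 < P v) ∧
        ∀ w : List α, 0 < P (u ++ w) → 0 < P (v ++ w) → E (L (u ++ w)) (L (v ++ w))) :=
  stmt_5_general α L hL P hPs E hE hsupp
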